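/- arXiv:2108.01762 — 9 statements merged into one kernel-verified Lean document; each statement's English description precedes it below -/
import Mathlib

section
/- Let ρ be a primitive, compactly bijective substitution of constant length L on a compact Hausdorff space 𝒜, and let 𝒢 be the closure in Homeo(𝒜) (compact-open topology) of the subgroup generated by the columns of ρ. Then 𝒢 acts transitively on 𝒜: for all a, b ∈ 𝒜 there exists g ∈ 𝒢 with g(a) = b. -/
/-- The group of self-homeomorphisms of a space, with `(f * g) x = f (g x)`. -/
instance homeoGroup {X : Type*} [TopologicalSpace X] : Group (X ≃ₜ X) where
  mul f g := g.trans f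
  one := Homeomorph.refl X
  inv := Homeomorph.symm
  mul_assoc f g h := Homeomorph.ext fun x => rfl
  one_mul f := Homeomorph.ext fun x => rfl
  mul_one f := Homeomorph.ext fun x => rfl
  inv_mul_cancel f := Homeomorph.ext fun x => f.symm_apply_apply x

/-- The compact-open topology on the group of self-homeomorphisms, induced
from the compact-open topology on `C(X, X)`. -/
noncomputable instance homeoCompactOpen {X : Type*} [TopologicalSpace X] :
    TopologicalSpace (X ≃ₜ X) :=
  TopologicalSpace.induced
    (fun g : X ≃ₜ X => (⟨g, g.continuous⟩ : C(X, X)))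
    ContinuousMap.compactOpen

/-!
Evaluation at `a` is continuous on `Homeo(X)`, so the `𝒢`-orbit of `a` is compact and hence
closed. Primitivity says exactly that the orbit of `a` under the words in the columns meets
every nonempty open set, i.e. is dense. A closed set containing a dense set is everything.
-/

namespace Homeomorph

variable {X : Type*} [TopologicalSpace X]

theorem continuous_apply_const (a : X) : Continuous fun g : X ≃ₜ X => g a := by
  have h : Continuous fun g : X ≃ₜ X => (⟨g, g.continuous⟩ : C(X, X)) := continuous_induced_dom
  exact (continuous_eval_const (F := C(X, X)) a).comp h

theorem isClosed_image_apply_of_isCompact [T2Space X] {G : Set (X ≃ₜ X)} (hG : IsCompact G)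
    (a : X) : IsClosed ((fun g : X ≃ₜ X => g a) '' G) :=
  (hG.image (continuous_apply_const a)).isClosed

theorem list_foldr_apply_eq_prod_map {ι : Type*} (ρ : ι → X ≃ₜ X) (l : List ι) (a : X) :
    l.foldr (fun j x => ρ j x) a = (l.map ρ).prod a := by
  induction l with
  | nil => rfl
  | cons j l ih => simp only [List.foldr_cons, List.map_cons, List.prod_cons, ih]; rfl

theorem dense_image_apply_closure_range {ι : Type*} (ρ : ι → X ≃ₜ X) (a : X)
    (hwords : ∀ U : Set X, IsOpen U → U.Nonempty →
      ∃ l : List ι, l.foldr (fun j x => ρ j x) a ∈ U) :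
    Dense ((fun g : X ≃ₜ X => g a) '' (Subgroup.closure (Set.range ρ) : Set (X ≃ₜ X))) := by
  refine dense_iff_inter_open.2 fun U hU hUne => ?_
  obtain ⟨l, hl⟩ := hwords U hU hUne
  have hmem : (l.map ρ).prod ∈ Subgroup.closure (Set.range ρ) :=
    list_prod_mem fun _ hx => by
      obtain ⟨j, -, rfl⟩ := List.mem_map.1 hx
      exact Subgroup.subset_closure ⟨j, rfl⟩
  rw [list_foldr_apply_eq_prod_map] at hl
  exact ⟨_, hl, _, hmem, rfl⟩

end Homeomorph

theorem closure_column_group_transitive_general {X : Type*} [TopologicalSpace X]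
    [T2Space X]
    (L : ℕ) (ρ : Fin L → (X ≃ₜ X))
    (hprim : ∀ U : Set X, IsOpen U → U.Nonempty →
      ∃ p : ℕ, 1 ≤ p ∧ ∀ a : X, ∃ i : Fin p → Fin L,
        (List.ofFn i).foldr (fun j x => ρ j x) a ∈ U)
    (G : Set (X ≃ₜ X))
    (hG : G = closure ((Subgroup.closure (Set.range ρ) : Subgroup (X ≃ₜ X)) :
      Set (X ≃ₜ X)))
    (hGcpt : IsCompact G) :
    ∀ a b : X, ∃ g ∈ G, g a = b := by
  intro a b
  have hwords : ∀ U : Set X, IsOpen U → U.Nonempty →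
      ∃ l : List (Fin L), l.foldr (fun j x => ρ j x) a ∈ U := fun U hU hUne => by
    obtain ⟨p, -, hword⟩ := hprim U hU hUne
    obtain ⟨i, hi⟩ := hword a
    exact ⟨_, hi⟩
  have hdense : Dense ((fun g : X ≃ₜ X => g a) '' G) := by
    refine (Homeomorph.dense_image_apply_closure_range ρ a hwords).mono (Set.image_mono ?_)
    rw [hG]
    exact subset_closure
  have horbit : (fun g : X ≃ₜ X => g a) '' G = Set.univ := by
    rw [← (Homeomorph.isClosed_image_apply_of_isCompact hGcpt a).closure_eq, hdense.closure_eq]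
  obtain ⟨g, hg, rfl⟩ := horbit.symm ▸ Set.mem_univ b
  exact ⟨g, hg, rfl⟩

/-- Let `ρ` be a primitive, compactly bijective substitution
of constant length `L` on a compact Hausdorff space `X`, with columns the
homeomorphisms `ρ_0, …, ρ_{L−1}`; primitivity says that for every nonempty
open `U` there is a `p ≥ 1` such that for every `a`, some composition of `p`
columns maps `a` into `U`.  Let `𝒢` be the closure, in the compact-open
topology on `Homeo(X)`, of the subgroup generated by the columns, and assume
`𝒢` is compact.  Then `𝒢` acts transitively on `X`. -/
theorem closure_column_group_transitive {X : Type*} [TopologicalSpace X]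
    [CompactSpace X] [T2Space X]
    (L : ℕ) (hL : 1 ≤ L) (ρ : Fin L → (X ≃ₜ X))
    (hprim : ∀ U : Set X, IsOpen U → U.Nonempty →
      ∃ p : ℕ, 1 ≤ p ∧ ∀ a : X, ∃ i : Fin p → Fin L,
        (List.ofFn i).foldr (fun j x => ρ j x) a ∈ U)
    (G : Set (X ≃ₜ X))
    (hG : G = closure ((Subgroup.closure (Set.range ρ) : Subgroup (X ≃ₜ X)) :
      Set (X ≃ₜ X)))
    (hGcpt : IsCompact G) :
    ∀ a b : X, ∃ g ∈ G, g a = b :=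
  closure_column_group_transitive_general L ρ hprim G hG hGcpt
end

section
/- Let 𝒜 be a compact Hausdorff abelian topological group, L ≥ 2, β_0, …, β_{L−1} ∈ 𝒜, 0 ≤ s ≤ L−1, and let w : ℤ → 𝒜 satisfy the pseudo-fixed point relations w_{Lm+k−s} = w_m β_k for all m ∈ ℤ and 0 ≤ k ≤ L−1. Let χ be a unitary character of 𝒜 and fix m ∈ ℤ. If the autocorrelation coefficients η(m) and η(m+1) exist, then for each 0 ≤ k ≤ L−1 the coefficient η(Lm+k) exists and satisfies η(Lm+k) = (1/L) · Σ_{r=0}^{L−1} η(m + ⌊(r+k)/L⌋) · χ(β_r) · conj(χ(β_{(r+k) mod L})). In particular (the case k = 0), if η(m) exists then η(L^ℓ m) exists and η(L^ℓ m) = η(m) for every ℓ ≥ 1. -/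
/-!
Write `j = L q + r - s` with `0 ≤ r < L`. The pseudo-fixed point relations give
`χ(w_j) conj χ(w_{j+Lm+k}) = χ(w_q) conj χ(w_{q+m+⌊(r+k)/L⌋}) · χ(β_r) conj χ(β_{(r+k) mod L})`,
so a sum over a window of `L(2M+1)` consecutive integers splits into `L` sums over `q ∈ [-M, M]`,
each a partial sum for `η(m)` or `η(m+1)`. Such windows differ from `[-N, N]` by `O(L + s)`
terms, which do not affect the averages because every term has modulus one. For `k = 0` the
formula reads `η(Lm) = η(m)`, and iterating gives `η(L^ℓ m) = η(m)`.
-/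

/-- `AutoCorr χ w m z` says that the autocorrelation coefficient
`η(m) = lim_{N→∞} (1/(2N+1)) Σ_{j=−N}^{N} χ(w_j)·conj(χ(w_{j+m}))`
exists and equals `z`. -/
def AutoCorr {A : Type*} (χ : A → ℂ) (w : ℤ → A) (m : ℤ) (z : ℂ) : Prop :=
  Filter.Tendsto (fun N : ℕ =>
      (∑ j ∈ Finset.Icc (-(N : ℤ)) (N : ℤ),
          χ (w j) * (starRingEnd ℂ) (χ (w (j + m)))) / (2 * (N : ℂ) + 1))
    Filter.atTop (nhds z)

open Filter Finset Topology

section Averages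

variable {α ι : Type*} {l : Filter α}

lemma tendsto_div_natCast_of_norm_le {u : α → ℂ} {n : α → ℕ} {K : ℝ} (hu : ∀ a, ‖u a‖ ≤ K)
    (hn : Tendsto n l atTop) : Tendsto (fun a => u a / n a) l (𝓝 0) := by
  simp_rw [div_eq_inv_mul]
  refine Tendsto.zero_mul_isBoundedUnder_le ?_ (isBoundedUnder_of ⟨K, hu⟩)
  simpa only [one_div, Function.comp_def] using
    (tendsto_one_div_atTop_nhds_zero_nat (𝕜 := ℂ)).comp hn

lemma norm_sum_le_card {f : ι → ℂ} (hf : ∀ i, ‖f i‖ ≤ 1) (s : Finset ι) :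
    ‖∑ i ∈ s, f i‖ ≤ #s := by
  simpa using norm_sum_le_of_le s fun i _ => hf i

variable [DecidableEq ι]

theorem tendsto_sum_div_card_of_card_sdiff_le {f : ι → ℂ} (hf : ∀ i, ‖f i‖ ≤ 1)
    {S T : α → Finset ι} {C : ℕ} (hST : ∀ a, #(S a \ T a) ≤ C) (hTS : ∀ a, #(T a \ S a) ≤ C)
    (hS : Tendsto (fun a => #(S a)) l atTop) {z : ℂ}
    (hT : Tendsto (fun a => (∑ i ∈ T a, f i) / #(T a)) l (𝓝 z)) :
    Tendsto (fun a => (∑ i ∈ S a, f i) / #(S a)) l (𝓝 z) := by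
  have hsum : ∀ a, ‖∑ i ∈ S a \ T a, f i - ∑ i ∈ T a \ S a, f i‖ ≤ 2 * C := fun a =>
    calc _ ≤ ‖∑ i ∈ S a \ T a, f i‖ + ‖∑ i ∈ T a \ S a, f i‖ := norm_sub_le _ _
      _ ≤ C + C := add_le_add ((norm_sum_le_card hf _).trans (mod_cast hST a))
          ((norm_sum_le_card hf _).trans (mod_cast hTS a))
      _ = 2 * C := by ring
  have hcard : ∀ a, ‖(#(T a \ S a) : ℂ) - #(S a \ T a)‖ ≤ C := by
    intro a
    have hp : (#(S a \ T a) : ℝ) ≤ C := mod_cast hST a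
    have hq : (#(T a \ S a) : ℝ) ≤ C := mod_cast hTS a
    rw [← Complex.ofReal_natCast, ← Complex.ofReal_natCast, ← Complex.ofReal_sub,
      Complex.norm_real, Real.norm_eq_abs, abs_sub_le_iff]
    constructor <;>
      linarith [(#(S a \ T a)).cast_nonneg (α := ℝ), (#(T a \ S a)).cast_nonneg (α := ℝ)]
  have hlim := (hT.add (tendsto_div_natCast_of_norm_le hsum hS)).add
    (hT.mul (tendsto_div_natCast_of_norm_le hcard hS))
  rw [add_zero, mul_zero, add_zero] at hlim
  refine hlim.congr' ?_
  filter_upwards [hS.eventually_gt_atTop 0] with a ha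
  set A := (∑ i ∈ T a, f i) / #(T a)
  have hTsum : A * #(T a) = ∑ i ∈ T a, f i := div_mul_cancel_of_imp fun h => by simp_all
  have hSsum := sum_inter_add_sum_sdiff (S a) (T a) f
  have hTsum' := sum_inter_add_sum_sdiff (T a) (S a) f
  have hScard : (#(S a ∩ T a) : ℂ) + #(S a \ T a) = #(S a) := mod_cast card_inter_add_card_sdiff _ _
  have hTcard : (#(S a ∩ T a) : ℂ) + #(T a \ S a) = #(T a) := by
    rw [inter_comm]; exact mod_cast card_inter_add_card_sdiff _ _
  rw [inter_comm] at hTsum'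
  have hn : (#(S a) : ℂ) ≠ 0 := by exact_mod_cast ha.ne'
  field_simp
  linear_combination -A * hScard + A * hTcard + hTsum - hTsum' + hSsum

end Averages

lemma card_Ico_sdiff_Ico_le (a b c d : ℤ) :
    #(Ico a b \ Ico c d) ≤ (c - a).natAbs + (b - d).natAbs := by
  have hsub : Ico a b \ Ico c d ⊆ Ico a c ∪ Ico d b := by
    intro x hx
    simp only [Finset.mem_sdiff, mem_Ico, mem_union] at hx ⊢
    omega
  calc _ ≤ #(Ico a c ∪ Ico d b) := card_le_card hsub
    _ ≤ #(Ico a c) + #(Ico d b) := card_union_le _ _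
    _ ≤ _ := by simp only [Int.card_Ico]; omega

theorem sum_Ico_mul_sub_eq_sum_fin {M : Type*} [AddCommMonoid M] (g : ℤ → M) {L : ℕ}
    (hL : 0 < L) (a b c : ℤ) :
    ∑ j ∈ Ico (L * a - c) (L * b - c), g j = ∑ r : Fin L, ∑ q ∈ Ico a b, g (L * q + r - c) := by
  have hL' : (0 : ℤ) < L := mod_cast hL
  rw [Fin.sum_univ_eq_sum_range (fun r => ∑ q ∈ Ico a b, g (L * q + r - c)), ← sum_product']
  symm
  refine sum_nbij' (fun x => L * x.2 + x.1 - c) (fun j => (((j + c) % L).toNat, (j + c) / L))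
    ?_ ?_ ?_ ?_ fun _ _ => rfl
  · rintro ⟨r, q⟩ h
    simp only [mem_product, mem_range, mem_Ico] at h ⊢
    constructor <;> nlinarith
  · intro j hj
    simp only [mem_product, mem_range, mem_Ico] at hj ⊢
    have := Int.emod_lt_of_pos (j + c) hL'
    exact ⟨by omega, (Int.le_ediv_iff_mul_le hL').2 (by linarith),
      (Int.ediv_lt_iff_lt_mul hL').2 (by linarith)⟩
  · rintro ⟨r, q⟩ h
    simp only [mem_product, mem_range, mem_Ico] at h
    have : L * q + r - c + c = r + L * q := by ring
    simp only [this, Prod.mk.injEq]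
    constructor
    · rw [Int.add_mul_emod_self_left, Int.emod_eq_of_lt (by positivity) (by omega)]; simp
    · rw [Int.add_mul_ediv_left _ _ hL'.ne', Int.ediv_eq_zero_of_lt (by positivity) (by omega),
        zero_add]
  · intro j _
    have := Int.mul_ediv_add_emod (j + c) L
    have := Int.emod_nonneg (j + c) hL'.ne'
    dsimp only
    omega

section Substitution

variable {A : Type*}

def corrTerm (χ : A → ℂ) (w : ℤ → A) (n j : ℤ) : ℂ :=
  χ (w j) * starRingEnd ℂ (χ (w (j + n)))

lemma norm_corrTerm {χ : A → ℂ} (hχ : ∀ a, ‖χ a‖ = 1) (w : ℤ → A) (n j : ℤ) :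
    ‖corrTerm χ w n j‖ = 1 := by
  simp [corrTerm, hχ]

lemma autoCorr_iff_tendsto_average {χ : A → ℂ} {w : ℤ → A} {n : ℤ} {z : ℂ} :
    AutoCorr χ w n z ↔ Tendsto (fun N : ℕ => (∑ j ∈ Ico (-(N : ℤ)) (N + 1), corrTerm χ w n j) /
      #(Ico (-(N : ℤ)) (N + 1))) atTop (𝓝 z) := by
  have hcard (N : ℕ) : (#(Icc (-(N : ℤ)) N) : ℂ) = 2 * N + 1 := by
    rw [Int.card_Icc, show (N : ℤ) + 1 - -N = ((2 * N + 1 : ℕ) : ℤ) by push_cast; ring,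
      Int.toNat_natCast]
    push_cast; ring
  simp only [Ico_add_one_right_eq_Icc, hcard]
  rfl

variable [MulOneClass A] {L : ℕ} {β : Fin L → A} {s : ℕ} {w : ℤ → A}
  {χ : A →* ℂ}

lemma corrTerm_mul_add (hw : ∀ (m : ℤ) (k : Fin L), w (L * m + k - s) = w m * β k)
    (m q : ℤ) (r : Fin L) (k : ℕ) :
    corrTerm χ w (L * m + k) (L * q + r - s) = corrTerm χ w (m + ((r + k) / L : ℕ)) q *
      (χ (β r) * starRingEnd ℂ (χ (β ⟨(r + k) % L, Nat.mod_lt _ r.pos⟩))) := by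
  have hdiv : ((L * ((r + k) / L) + (r + k) % L : ℕ) : ℤ) = r + k := mod_cast Nat.div_add_mod _ _
  push_cast at hdiv
  have harg : L * q + r - s + (L * m + k) =
      L * (q + (m + ((r + k) / L : ℕ))) + (((r + k) % L : ℕ) : ℤ) - s := by
    push_cast; linear_combination -hdiv
  have hshift := hw (q + (m + ((r + k) / L : ℕ))) ⟨(r + k) % L, Nat.mod_lt _ r.pos⟩
  simp only [corrTerm, hw, harg]
  rw [hshift]
  simp only [map_mul]
  ring

lemma tendsto_average_blocks (hw : ∀ (m : ℤ) (k : Fin L), w (L * m + k - s) = w m * β k)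
    {m : ℤ} {k : ℕ} (hk : k < L) {η : Fin L → ℂ}
    (hη : ∀ r : Fin L, AutoCorr χ w (m + ((r + k) / L : ℕ)) (η r)) :
    Tendsto (fun M : ℕ => (∑ j ∈ Ico (L * -(M : ℤ) - s) (L * (M + 1) - s),
        corrTerm χ w (L * m + k) j) / #(Ico (L * -(M : ℤ) - s) (L * (M + 1) - s))) atTop
      (𝓝 ((∑ r : Fin L, η r * χ (β r) *
        starRingEnd ℂ (χ (β ⟨(r + k) % L, Nat.mod_lt _ (by omega)⟩))) / L)) := by
  have hL : 0 < L := by omega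
  have hcard (M : ℕ) : (#(Ico (L * -(M : ℤ) - s) (L * (M + 1) - s)) : ℂ) =
      L * #(Ico (-(M : ℤ)) (M + 1)) := by
    rw [Int.card_Ico, Int.card_Ico,
      show (L : ℤ) * (M + 1) - s - (L * -M - s) = ((L * (2 * M + 1) : ℕ) : ℤ) by push_cast; ring,
      show (M : ℤ) + 1 - -M = ((2 * M + 1 : ℕ) : ℤ) by push_cast; ring,
      Int.toNat_natCast, Int.toNat_natCast, Nat.cast_mul]
  have hblock (M : ℕ) : (∑ j ∈ Ico (L * -(M : ℤ) - s) (L * (M + 1) - s),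
      corrTerm χ w (L * m + k) j) / #(Ico (L * -(M : ℤ) - s) (L * (M + 1) - s)) =
      (∑ r : Fin L, (∑ q ∈ Ico (-(M : ℤ)) (M + 1), corrTerm χ w (m + ((r + k) / L : ℕ)) q) /
        #(Ico (-(M : ℤ)) (M + 1)) * (χ (β r) *
          starRingEnd ℂ (χ (β ⟨(r + k) % L, Nat.mod_lt _ r.pos⟩)))) / L := by
    rw [sum_Ico_mul_sub_eq_sum_fin _ hL, hcard, sum_div, sum_div]
    refine sum_congr rfl fun r _ => ?_
    simp only [corrTerm_mul_add hw, ← sum_mul]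
    ring
  simp only [hblock, mul_assoc]
  exact (tendsto_finsetSum _ fun r _ =>
    ((autoCorr_iff_tendsto_average.1 (hη r)).mul_const _)).div_const _

theorem autoCorr_mul_add (hw : ∀ (m : ℤ) (k : Fin L), w (L * m + k - s) = w m * β k)
    (hχ : ∀ a, ‖χ a‖ = 1) {m : ℤ} {k : ℕ} (hk : k < L) {η : Fin L → ℂ}
    (hη : ∀ r : Fin L, AutoCorr χ w (m + ((r + k) / L : ℕ)) (η r)) :
    AutoCorr χ w (L * m + k) ((∑ r : Fin L, η r * χ (β r) *
      starRingEnd ℂ (χ (β ⟨(r + k) % L, Nat.mod_lt _ (by omega)⟩))) / L) := by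
  have hL : L ≠ 0 := by omega
  have hdiv (N : ℕ) : (L : ℤ) * (N / L : ℕ) + (N % L : ℕ) = N := mod_cast Nat.div_add_mod N L
  have hmod (N : ℕ) : N % L < L := Nat.mod_lt N (by omega)
  rw [autoCorr_iff_tendsto_average]
  refine tendsto_sum_div_card_of_card_sdiff_le (fun j => (norm_corrTerm hχ w _ j).le)
    (C := 2 * (L + s)) (fun N => ?_) (fun N => ?_) ?_
    ((tendsto_average_blocks hw hk hη).comp (Nat.tendsto_div_const_atTop hL))
  · refine (card_Ico_sdiff_Ico_le _ _ _ _).trans ?_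
    simp only [mul_neg, mul_add, mul_one]
    have := hdiv N; have := hmod N; omega
  · refine (card_Ico_sdiff_Ico_le _ _ _ _).trans ?_
    simp only [mul_neg, mul_add, mul_one]
    have := hdiv N; have := hmod N; omega
  · refine tendsto_atTop_mono (fun N => ?_) tendsto_id
    simp only [Int.card_Ico, id]
    omega

theorem autoCorr_mul (hw : ∀ (m : ℤ) (k : Fin L), w (L * m + k - s) = w m * β k)
    (hχ : ∀ a, ‖χ a‖ = 1) (hL : 0 < L) {n : ℤ} {z : ℂ} (h : AutoCorr χ w n z) :
    AutoCorr χ w (L * n) z := by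
  have hterm (r : Fin L) :
      z * χ (β r) * starRingEnd ℂ (χ (β ⟨(r + 0) % L, Nat.mod_lt _ hL⟩)) = z := by
    simp [Nat.mod_eq_of_lt r.isLt, mul_assoc, Complex.mul_conj', hχ]
  have h' := autoCorr_mul_add hw hχ hL (k := 0) (η := fun _ => z)
    fun r => by simpa [Nat.div_eq_of_lt r.isLt] using h
  rwa [sum_congr rfl fun r _ => hterm r, sum_const, card_univ, Fintype.card_fin, nsmul_eq_mul,
    mul_div_cancel_left₀ _ (Nat.cast_ne_zero.2 hL.ne'), Nat.cast_zero, add_zero] at h'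

end Substitution

/-- For a pseudo-fixed point `w` of a bijective abelian
substitution of constant length `L` with columns `θ ↦ θβ_k` and shift `s`,
weighted by a unitary character `χ`: if `η(m)` and `η(m+1)` exist, then for
each `0 ≤ k ≤ L−1`, `η(Lm+k)` exists and equals
`(1/L)·Σ_{r=0}^{L−1} η(m+⌊(r+k)/L⌋)·χ(β_r)·conj(χ(β_{(r+k) mod L}))`;
in particular `η(L^ℓ m) = η(m)` for all `ℓ ≥ 1`. -/
theorem bijective_recurrence {A : Type*} [CommGroup A]
    (L : ℕ) (hL : 2 ≤ L) (β : Fin L → A) (s : ℕ)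
    (w : ℤ → A)
    (hw : ∀ (m : ℤ) (k : Fin L),
      w ((L : ℤ) * m + (k : ℤ) - (s : ℤ)) = w m * β k)
    (χ : A →* ℂ)
    (hχunit : ∀ a : A, ‖χ a‖ = 1)
    (m : ℤ) (ηm ηm1 : ℂ)
    (hηm : AutoCorr χ w m ηm) (hηm1 : AutoCorr χ w (m + 1) ηm1) :
    (∀ k : ℕ, k ≤ L - 1 →
      AutoCorr χ w ((L : ℤ) * m + (k : ℤ))
        ((∑ r : Fin L,
            (if ((r : ℕ) + k) / L = 0 then ηm else ηm1) *
              χ (β r) *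
              (starRingEnd ℂ)
                (χ (β ⟨((r : ℕ) + k) % L, Nat.mod_lt _ (by omega)⟩))) /
          (L : ℂ))) ∧
    ∀ ℓ : ℕ, 1 ≤ ℓ → AutoCorr χ w ((L : ℤ) ^ ℓ * m) ηm := by
  refine ⟨fun k hk => autoCorr_mul_add hw hχunit (by omega) fun r => ?_, fun ℓ hℓ => ?_⟩
  · have hcarry : ((r : ℕ) + k) / L < 2 := Nat.div_lt_of_lt_mul (by omega)
    interval_cases ((r : ℕ) + k) / L <;> simpa
  · induction ℓ, hℓ using Nat.le_induction with
    | base => simpa using autoCorr_mul hw hχunit (by omega) hηm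
    | succ ℓ _ ih => simpa [pow_succ', mul_assoc] using autoCorr_mul hw hχunit (by omega) ih
end

section
/- Let L ≥ 2 and let η : ℤ → ℂ satisfy: η(−m) = conj(η(m)) and |η(m)| ≤ |η(0)| for all m ∈ ℤ, and |η(Lm+k)| ≤ ((L−k)/L)·|η(m)| + (k/L)·|η(m+1)| for all m ∈ ℤ and 0 ≤ k ≤ L−1. If there is c > 0 with |η(0)| − |η(1)| > c, then |η(0)| − |η(k)| > c/L for every k ∈ ℤ with k ≠ 0. Consequently, for every ε with 0 < ε < √(c/L), the set of ε-almost periods P_ε = {m ∈ ℤ : |η(0) − η(m)|^{1/2} < ε} equals {0}, and in particular P_ε is not relatively dense in ℤ. -/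
/-- A set `S ⊆ ℤ` is relatively dense if there is `R > 0` such that every
interval of length `R` in `ℤ` contains a point of `S`. -/
def RelDense (S : Set ℤ) : Prop :=
  ∃ R : ℕ, 0 < R ∧ ∀ a : ℤ, ∃ m ∈ S, a ≤ m ∧ m < a + R

/-!
Write `g m = ‖η 0‖ - ‖η m‖`. Multiplying the recursive inequality by `L` shows that
`L · g (L m + k) ≥ (L - k) · g m + k · g (m + 1)`, i.e. `g (L m + k)` dominates a convex
combination of `g m` and `g (m + 1)`. For `0 < n < L` this gives `L · g n ≥ n · g 1 > c`;
for `n = L m + k ≥ L`, strong induction shows that `g m` and `g (m + 1)` already exceed `c / L`.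
The symmetry `η (-m) = conj (η m)` makes `g` even, and the gap `g k > c / L` keeps every `m ≠ 0` out of `P_ε`.
-/

def NormRecursive (L : ℕ) (η : ℤ → ℂ) : Prop :=
  ∀ (m : ℤ) (k : ℕ), k ≤ L - 1 →
    ‖η ((L : ℤ) * m + (k : ℤ))‖ ≤ (((L : ℝ) - (k : ℝ)) / L) * ‖η m‖ + ((k : ℝ) / L) * ‖η (m + 1)‖

namespace NormRecursive

variable {L : ℕ} {η : ℤ → ℂ}

theorem convex_combination_le (hrec : NormRecursive L η) (m : ℤ) {k : ℕ} (hk : k < L) :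
    ((L : ℝ) - k) * (‖η 0‖ - ‖η m‖) + k * (‖η 0‖ - ‖η (m + 1)‖) ≤
      L * (‖η 0‖ - ‖η (L * m + k)‖) := by
  have hL : (0 : ℝ) < L := by exact_mod_cast (k.zero_le.trans_lt hk)
  have h := mul_le_mul_of_nonneg_left (hrec m k (by omega)) hL.le
  field_simp at h
  linarith

theorem lt_mul_sub_norm_of_lt (hrec : NormRecursive L η) {c : ℝ} (hc : 0 < c)
    (hgap : c < ‖η 0‖ - ‖η 1‖) {r : ℕ} (hr₀ : r ≠ 0) (hr : r < L) :
    c < L * (‖η 0‖ - ‖η r‖) := by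
  have hcomb := hrec.convex_combination_le 0 hr
  simp only [sub_self, mul_zero, zero_add] at hcomb
  have hr₁ : (1 : ℝ) ≤ r := by exact_mod_cast Nat.one_le_iff_ne_zero.2 hr₀
  calc c < ‖η 0‖ - ‖η 1‖ := hgap
    _ ≤ r * (‖η 0‖ - ‖η 1‖) := le_mul_of_one_le_left (hc.trans hgap).le hr₁
    _ ≤ L * (‖η 0‖ - ‖η r‖) := hcomb

theorem div_lt_sub_norm_natCast (hrec : NormRecursive L η) (hL : 2 ≤ L) {c : ℝ} (hc : 0 < c)
    (hgap : c < ‖η 0‖ - ‖η 1‖) (n : ℕ) (hn : n ≠ 0) : c / L < ‖η 0‖ - ‖η n‖ := by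
  have hL₀ : (0 : ℝ) < L := by positivity
  rw [div_lt_iff₀' hL₀]
  induction n using Nat.strong_induction_on with
  | _ n IH =>
    set m := n / L
    set r := n % L
    have hr : r < L := Nat.mod_lt _ (by omega)
    have hn_dec : n = L * m + r := (Nat.div_add_mod n L).symm
    rcases Nat.eq_zero_or_pos m with hm | hm
    · rw [hm, Nat.mul_zero, zero_add] at hn_dec
      exact hn_dec ▸ hrec.lt_mul_sub_norm_of_lt hc hgap (hn_dec ▸ hn) hr
    have hLm : 2 * m ≤ L * m := Nat.mul_le_mul_right m hL
    have hcomb := hrec.convex_combination_le m hr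
    rw [show (L : ℤ) * m + r = n by exact_mod_cast hn_dec.symm] at hcomb
    have hm_lt : (L - r : ℝ) * c < (L - r) * (L * (‖η 0‖ - ‖η m‖)) := by
      have : (r : ℝ) < L := by exact_mod_cast hr
      exact mul_lt_mul_of_pos_left (IH m (by omega) hm.ne') (by linarith)
    -- the weight of `m + 1` vanishes when `r = 0`, where `m + 1 < n` may fail
    have hnext : (r : ℝ) * c ≤ r * (L * (‖η 0‖ - ‖η ((m : ℤ) + 1)‖)) := by
      rcases Nat.eq_zero_or_pos r with hr₀ | hr₀
      · simp [hr₀]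
      · exact_mod_cast mul_le_mul_of_nonneg_left (IH (m + 1) (by omega) (by omega)).le r.cast_nonneg
    have hsum : (L : ℝ) * c < L * (L * (‖η 0‖ - ‖η n‖)) := by
      linarith [mul_le_mul_of_nonneg_left hcomb hL₀.le]
    exact lt_of_mul_lt_mul_left hsum hL₀.le

end NormRecursive

theorem norm_neg_eq_of_conj {η : ℤ → ℂ} (hsymm : ∀ m : ℤ, η (-m) = (starRingEnd ℂ) (η m))
    (m : ℤ) : ‖η (-m)‖ = ‖η m‖ := by
  rw [hsymm, Complex.norm_conj]

theorem setOf_sqrt_norm_sub_lt_eq_singleton {α E : Type*} [Zero α] [SeminormedAddCommGroup E]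
    {f : α → E} {t ε : ℝ} (hgap : ∀ a, a ≠ 0 → t < ‖f 0‖ - ‖f a‖) (hε : 0 < ε)
    (hεt : ε ≤ Real.sqrt t) : {a | Real.sqrt ‖f 0 - f a‖ < ε} = {0} := by
  ext a
  simp only [Set.mem_ofPred_eq, Set.mem_singleton_iff]
  refine ⟨fun ha => ?_, fun ha => by simp [ha, hε]⟩
  by_contra ha₀
  have : t < ‖f 0 - f a‖ := (hgap a ha₀).trans_le ((le_abs_self _).trans (abs_norm_sub_norm_le _ _))
  exact (hεt.trans (Real.sqrt_le_sqrt this.le)).not_gt ha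

theorem not_relDense_singleton (z : ℤ) : ¬ RelDense {z} := by
  rintro ⟨R, -, hR⟩
  obtain ⟨m, rfl, hm, -⟩ := hR (z + 1)
  omega

theorem bijective_absence_of_pure_point_general (L : ℕ) (hL : 2 ≤ L) (η : ℤ → ℂ)
    (hsymm : ∀ m : ℤ, η (-m) = (starRingEnd ℂ) (η m))
    (hrec : ∀ (m : ℤ) (k : ℕ), k ≤ L - 1 →
      ‖η ((L : ℤ) * m + (k : ℤ))‖ ≤
        (((L : ℝ) - (k : ℝ)) / L) * ‖η m‖
          + ((k : ℝ) / L) * ‖η (m + 1)‖)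
    (c : ℝ) (hc : 0 < c)
    (hgap : ‖η 0‖ - ‖η 1‖ > c) :
    (∀ k : ℤ, k ≠ 0 → ‖η 0‖ - ‖η k‖ > c / L) ∧
    ∀ ε : ℝ, 0 < ε → ε < Real.sqrt (c / L) →
      {m : ℤ | Real.sqrt (‖η 0 - η m‖) < ε} = {0} ∧
      ¬ RelDense {m : ℤ | Real.sqrt (‖η 0 - η m‖) < ε} := by
  have hnat := NormRecursive.div_lt_sub_norm_natCast hrec hL hc hgap
  have hint : ∀ k : ℤ, k ≠ 0 → c / L < ‖η 0‖ - ‖η k‖ := by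
    intro k hk
    rcases Int.natAbs_eq k with hk' | hk' <;> rw [hk'] at hk ⊢
    · exact hnat _ (by simpa using hk)
    · rw [norm_neg_eq_of_conj hsymm]
      exact hnat _ (by simpa using hk)
  refine ⟨hint, fun ε hε hεc => ?_⟩
  have hset := setOf_sqrt_norm_sub_lt_eq_singleton hint hε hεc.le
  exact ⟨hset, hset ▸ not_relDense_singleton 0⟩

/-- If `η : ℤ → ℂ` satisfies `η(−m) = conj (η m)`,
`|η m| ≤ |η 0|`, the recursive inequalities
`|η(Lm+k)| ≤ ((L−k)/L)|η m| + (k/L)|η (m+1)|`, and `|η 0| − |η 1| > c > 0`,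
then `|η 0| − |η k| > c/L` for all `k ≠ 0`; consequently, for every
`0 < ε < √(c/L)`, the set of `ε`-almost periods
`P_ε = {m : |η 0 − η m|^{1/2} < ε}` equals `{0}` and is not relatively dense. -/
theorem bijective_absence_of_pure_point (L : ℕ) (hL : 2 ≤ L) (η : ℤ → ℂ)
    (hsymm : ∀ m : ℤ, η (-m) = (starRingEnd ℂ) (η m))
    (hbound : ∀ m : ℤ, ‖η m‖ ≤ ‖η 0‖)
    (hrec : ∀ (m : ℤ) (k : ℕ), k ≤ L - 1 →
      ‖η ((L : ℤ) * m + (k : ℤ))‖ ≤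
        (((L : ℝ) - (k : ℝ)) / L) * ‖η m‖
          + ((k : ℝ) / L) * ‖η (m + 1)‖)
    (c : ℝ) (hc : 0 < c)
    (hgap : ‖η 0‖ - ‖η 1‖ > c) :
    (∀ k : ℤ, k ≠ 0 → ‖η 0‖ - ‖η k‖ > c / L) ∧
    ∀ ε : ℝ, 0 < ε → ε < Real.sqrt (c / L) →
      {m : ℤ | Real.sqrt (‖η 0 - η m‖) < ε} = {0} ∧
      ¬ RelDense {m : ℤ | Real.sqrt (‖η 0 - η m‖) < ε} :=
  bijective_absence_of_pure_point_general L hL η hsymm hrec c hc hgap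
end

section
/- Let n ≥ 1, let 𝒜 be the additive group ℤ/nℤ, let b_0, b_1 ∈ ℤ/nℤ with b_1 of additive order n, and let ρ_cyc be the substitution of constant length n+1 on 𝒜 given by ρ_cyc(θ) = (θ+b_0)(θ+b_0+b_1)(θ+b_0+2b_1)⋯(θ+b_0+(n−1)b_1)(θ+b_0). Then every element x of the subshift X_{ρ_cyc} satisfies x_{m+1} = x_m + b_1 for all m ∈ ℤ; in particular σ^n(x) = x for every x ∈ X_{ρ_cyc}, so the subshift defined by ρ_cyc is periodic. -/
/-- One substitution step applied letterwise to a word. -/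
def substWord {A : Type*} (ρ : A → List A) : List A → List A :=
  fun l => l.flatMap ρ

/-- The word `ρ^p(a)`. -/
def substIter {A : Type*} (ρ : A → List A) (p : ℕ) (a : A) : List A :=
  (substWord ρ)^[p] [a]

/-- `u` occurs as a subword of the word `l` (at some position `i`). -/
def OccursIn {A : Type*} {n : ℕ} (u : Fin n → A) (l : List A) : Prop :=
  ∃ i : ℕ, ∀ t : Fin n, l[i + (t : ℕ)]? = some (u t)

/-- The words admitted by `ρ`: subwords of some `ρ^p(a)`, `p ≥ 1`. -/
def Admitted {A : Type*} (ρ : A → List A) (n : ℕ) : Set (Fin n → A) :=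
  {u | ∃ (a : A) (p : ℕ), 1 ≤ p ∧ OccursIn u (substIter ρ p a)}

/-- The legal words: the closure of the admitted words in `A^n`. -/
def Legal {A : Type*} [TopologicalSpace A] (ρ : A → List A) (n : ℕ) :
    Set (Fin n → A) :=
  closure (Admitted ρ n)

/-- The subshift of `ρ`: all bi-infinite sequences all of whose finite
subwords are legal. -/
def SubshiftOf {A : Type*} [TopologicalSpace A] (ρ : A → List A) :
    Set (ℤ → A) :=
  {x | ∀ (i : ℤ) (n : ℕ), (fun t : Fin n => x (i + (t : ℤ))) ∈ Legal ρ n}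

/-- A finite alphabet carries the discrete topology. -/
instance (n : ℕ) : TopologicalSpace (ZMod n) := ⊥

/-!
Every word `ρ_cyc(θ)` is an arithmetic progression with step `b₁` (the final letter closes the
cycle because `n • b₁ = 0`), and it begins and ends with `θ + b₀`. Hence if `θ' = θ + b₁`, the
last letter of `ρ_cyc(θ)` and the first letter of `ρ_cyc(θ')` again differ by `b₁`, so applying
`ρ_cyc` to a progression with step `b₁` yields one. By induction every `ρ_cyc^p(a)` is such a
progression, so every legal word of length two is of the form `θ (θ + b₁)`, and this is read off
along every point of the subshift.
-/

namespace List

variable {α β : Type*} {R : α → α → Prop} {S : β → β → Prop}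

theorem IsChain.flatMap {ρ : α → List β} {w : List α} (hw : w.IsChain R)
    (hne : ∀ a, ρ a ≠ []) (hρ : ∀ a, (ρ a).IsChain S)
    (hlink : ∀ a b, R a b → ∀ x ∈ (ρ a).getLast?, ∀ y ∈ (ρ b).head?, S x y) :
    (w.flatMap ρ).IsChain S := by
  rw [flatMap_def, isChain_flatten (by simpa using fun a _ => hne a), isChain_map]
  exact ⟨by simpa using fun a _ => hρ a, hw.imp hlink⟩

theorem IsChain.rel_of_getElem? {l : List α} (hl : l.IsChain R) {i : ℕ} {a b : α}
    (ha : l[i]? = some a) (hb : l[i + 1]? = some b) : R a b := by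
  obtain ⟨hi, rfl⟩ := getElem?_eq_some_iff.1 ha
  obtain ⟨hi', rfl⟩ := getElem?_eq_some_iff.1 hb
  exact isChain_iff_getElem.1 hl i hi'

end List

section Substitution

variable {A : Type*} {ρ : A → List A} {R : A → A → Prop}

theorem isChain_substIter (hne : ∀ a, ρ a ≠ []) (hρ : ∀ a, (ρ a).IsChain R)
    (hlink : ∀ a b, R a b → ∀ x ∈ (ρ a).getLast?, ∀ y ∈ (ρ b).head?, R x y)
    (p : ℕ) (a : A) : (substIter ρ p a).IsChain R := by
  induction p with
  | zero => exact List.isChain_singleton a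
  | succ p ih =>
    rw [substIter, Function.iterate_succ_apply']
    exact ih.flatMap hne hρ hlink

theorem rel_of_mem_admitted_two (h : ∀ p a, (substIter ρ p a).IsChain R) {u : Fin 2 → A}
    (hu : u ∈ Admitted ρ 2) : R (u 0) (u 1) := by
  obtain ⟨a, p, -, i, hocc⟩ := hu
  exact (h p a).rel_of_getElem? (hocc 0) (hocc 1)

theorem rel_of_mem_subshiftOf [TopologicalSpace A] [DiscreteTopology A]
    (h : ∀ p a, (substIter ρ p a).IsChain R) {x : ℤ → A} (hx : x ∈ SubshiftOf ρ) (m : ℤ) :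
    R (x m) (x (m + 1)) := by
  have hm := hx m 2
  rw [Legal, closure_discrete] at hm
  simpa using rel_of_mem_admitted_two h hm

end Substitution

section Cyclic

variable {G : Type*} [AddCommMonoid G] {n : ℕ} {b₀ b₁ : G}

def cyclicSubst (n : ℕ) (b₀ b₁ : G) (θ : G) : List G :=
  (List.ofFn fun i : Fin n => θ + b₀ + (i : ℕ) • b₁) ++ [θ + b₀]

theorem cyclicSubst_eq_ofFn (h : n • b₁ = 0) (θ : G) :
    cyclicSubst n b₀ b₁ θ = List.ofFn fun i : Fin (n + 1) => θ + b₀ + (i : ℕ) • b₁ := by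
  rw [List.ofFn_succ']
  simp [cyclicSubst, h]

theorem cyclicSubst_ne_nil (θ : G) : cyclicSubst n b₀ b₁ θ ≠ [] := by
  simp [cyclicSubst]

theorem head?_cyclicSubst (h : n • b₁ = 0) (θ : G) :
    (cyclicSubst n b₀ b₁ θ).head? = some (θ + b₀) := by
  simp [cyclicSubst_eq_ofFn h, List.ofFn_succ]

theorem getLast?_cyclicSubst (θ : G) : (cyclicSubst n b₀ b₁ θ).getLast? = some (θ + b₀) :=
  List.getLast?_concat

theorem isChain_cyclicSubst (h : n • b₁ = 0) (θ : G) :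
    (cyclicSubst n b₀ b₁ θ).IsChain fun a c => c = a + b₁ := by
  rw [cyclicSubst_eq_ofFn h, List.isChain_ofFn]
  intro i _
  simp only [succ_nsmul, add_assoc]

theorem isChain_substIter_cyclicSubst (h : n • b₁ = 0) (p : ℕ) (a : G) :
    (substIter (cyclicSubst n b₀ b₁) p a).IsChain fun a c => c = a + b₁ := by
  refine isChain_substIter cyclicSubst_ne_nil (isChain_cyclicSubst h) ?_ p a
  rintro θ _ rfl x hx y hy
  rw [getLast?_cyclicSubst, Option.mem_some_iff] at hx
  rw [head?_cyclicSubst h, Option.mem_some_iff] at hy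
  rw [← hx, ← hy, add_right_comm]

end Cyclic

theorem apply_add_natCast_of_forall_apply_add_one {G : Type*} [AddMonoid G] {x : ℤ → G}
    {b : G} (hx : ∀ m, x (m + 1) = x m + b) (m : ℤ) (k : ℕ) : x (m + k) = x m + k • b := by
  induction k with
  | zero => simp
  | succ k ih => rw [Nat.cast_succ, ← add_assoc, hx, ih, succ_nsmul, add_assoc]

instance (n : ℕ) : DiscreteTopology (ZMod n) := ⟨rfl⟩

theorem cyclic_substitution_periodic_general (n : ℕ)
    (b0 b1 : ZMod n) :
    (∀ x ∈ SubshiftOf (fun θ : ZMod n =>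
        (List.ofFn fun i : Fin n => θ + b0 + (i : ℕ) • b1) ++ [θ + b0]),
      ∀ m : ℤ, x (m + 1) = x m + b1) ∧
    ∀ x ∈ SubshiftOf (fun θ : ZMod n =>
        (List.ofFn fun i : Fin n => θ + b0 + (i : ℕ) • b1) ++ [θ + b0]),
      ∀ m : ℤ, x (m + (n : ℤ)) = x m := by
  have hper : n • b1 = 0 := by simp [nsmul_eq_mul]
  have step : ∀ x ∈ SubshiftOf (cyclicSubst n b0 b1), ∀ m : ℤ, x (m + 1) = x m + b1 :=
    fun x hx m => rel_of_mem_subshiftOf (isChain_substIter_cyclicSubst hper) hx m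
  refine ⟨step, fun x hx m => ?_⟩
  rw [apply_add_natCast_of_forall_apply_add_one (step x hx), hper, add_zero]

/-- For `b_0, b_1 ∈ ℤ/nℤ` with `b_1` of additive order `n`,
the substitution
`ρ_cyc(θ) = (θ+b_0)(θ+b_0+b_1)⋯(θ+b_0+(n−1)b_1)(θ+b_0)` of constant length
`n+1` generates a periodic subshift: every `x ∈ X_{ρ_cyc}` satisfies
`x_{m+1} = x_m + b_1` for all `m`, and in particular `σ^n(x) = x`. -/
theorem cyclic_substitution_periodic (n : ℕ) (hn : 1 ≤ n)
    (b0 b1 : ZMod n) (hb1 : addOrderOf b1 = n) :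
    (∀ x ∈ SubshiftOf (fun θ : ZMod n =>
        (List.ofFn fun i : Fin n => θ + b0 + (i : ℕ) • b1) ++ [θ + b0]),
      ∀ m : ℤ, x (m + 1) = x m + b1) ∧
    ∀ x ∈ SubshiftOf (fun θ : ZMod n =>
        (List.ofFn fun i : Fin n => θ + b0 + (i : ℕ) • b1) ++ [θ + b0]),
      ∀ m : ℤ, x (m + (n : ℤ)) = x m :=
  cyclic_substitution_periodic_general n b0 b1
end

section
/- Let L ≥ 2, let p be an integer with 1 ≤ p ≤ L, and let η : ℤ → ℂ satisfy η(0) = 1, |η(m)| ≤ 1 for all m ∈ ℤ, and η(Lm) = p/L + ((L−p)/L)·η(m) for all m ∈ ℤ. Then for every ε > 0 the set {m ∈ ℤ : |1 − η(m)| < ε} is relatively dense in ℤ. Moreover, for every m ∈ ℤ one has η(L^ℓ m) → 1 as ℓ → ∞, uniformly in m. -/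
section AffineRecursion

variable {M R : Type*} [Monoid M]

theorem one_sub_apply_pow_mul [Ring R] {η : M → R} {a : M} {c : R}
    (hrec : ∀ m, η (a * m) = 1 - c + c * η m) (ℓ : ℕ) (m : M) :
    1 - η (a ^ ℓ * m) = c ^ ℓ * (1 - η m) := by
  induction ℓ with
  | zero => simp
  | succ n ih =>
    calc 1 - η (a ^ (n + 1) * m) = c * (1 - η (a ^ n * m)) := by
          rw [pow_succ', mul_assoc, hrec]; noncomm_ring
      _ = c ^ (n + 1) * (1 - η m) := by rw [ih, pow_succ', mul_assoc]

theorem norm_apply_pow_mul_sub_one_le [NormedRing R] [NormOneClass R] {η : M → R} {a : M}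
    {c : R} (hbound : ∀ m, ‖η m‖ ≤ 1) (hrec : ∀ m, η (a * m) = 1 - c + c * η m)
    (ℓ : ℕ) (m : M) : ‖η (a ^ ℓ * m) - 1‖ ≤ 2 * ‖c‖ ^ ℓ := by
  have hdiff : ‖1 - η m‖ ≤ 2 := by
    calc ‖1 - η m‖ ≤ ‖(1 : R)‖ + ‖η m‖ := norm_sub_le _ _
      _ ≤ 2 := by rw [norm_one]; linarith [hbound m]
  calc ‖η (a ^ ℓ * m) - 1‖ = ‖c ^ ℓ * (1 - η m)‖ := by
        rw [norm_sub_rev, one_sub_apply_pow_mul hrec]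
    _ ≤ ‖c‖ ^ ℓ * ‖1 - η m‖ :=
        (norm_mul_le _ _).trans (mul_le_mul_of_nonneg_right (norm_pow_le _ _) (norm_nonneg _))
    _ ≤ 2 * ‖c‖ ^ ℓ := by nlinarith [pow_nonneg (norm_nonneg c) ℓ]

theorem exists_forall_norm_apply_pow_mul_sub_one_lt [NormedRing R] [NormOneClass R]
    {η : M → R} {a : M} {c : R} (hc : ‖c‖ < 1) (hbound : ∀ m, ‖η m‖ ≤ 1)
    (hrec : ∀ m, η (a * m) = 1 - c + c * η m) {ε : ℝ} (hε : 0 < ε) :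
    ∃ N : ℕ, ∀ ℓ, N ≤ ℓ → ∀ m, ‖η (a ^ ℓ * m) - 1‖ < ε := by
  have htend : Filter.Tendsto (fun ℓ : ℕ => 2 * ‖c‖ ^ ℓ) Filter.atTop (nhds 0) := by
    simpa using (tendsto_pow_atTop_nhds_zero_of_lt_one (norm_nonneg c) hc).const_mul 2
  obtain ⟨N, hN⟩ := (htend.eventually (gt_mem_nhds hε)).exists_forall_of_atTop
  exact ⟨N, fun ℓ hℓ m => (norm_apply_pow_mul_sub_one_le hbound hrec ℓ m).trans_lt (hN ℓ hℓ)⟩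

end AffineRecursion

theorem relDense_of_forall_mul_mem {S : Set ℤ} {R : ℕ} (hR : 0 < R)
    (hS : ∀ k : ℤ, (R : ℤ) * k ∈ S) : RelDense S := by
  refine ⟨R, hR, fun a => ⟨a + (-a) % R, ?_, ?_, ?_⟩⟩
  · have hmul : a + (-a) % R = R * -((-a) / R) := by rw [Int.emod_def]; ring
    exact hmul ▸ hS _
  · linarith [Int.emod_nonneg (-a) (by omega : (R : ℤ) ≠ 0)]
  · linarith [Int.emod_lt_of_pos (-a) (by omega : (0 : ℤ) < R)]

theorem coincidence_almost_periods_general (L : ℕ) (p : ℕ)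
    (hp1 : 1 ≤ p) (hpL : p ≤ L) (η : ℤ → ℂ)
    (hbound : ∀ m : ℤ, ‖η m‖ ≤ 1)
    (hrec : ∀ m : ℤ, η ((L : ℤ) * m) = (p : ℂ) / L + (((L : ℂ) - p) / L) * η m) :
    (∀ ε : ℝ, 0 < ε → RelDense {m : ℤ | ‖1 - η m‖ < ε}) ∧
    ∀ ε : ℝ, 0 < ε → ∃ N : ℕ, ∀ ℓ : ℕ, N ≤ ℓ → ∀ m : ℤ,
      ‖η ((L : ℤ) ^ ℓ * m) - 1‖ < ε := by
  have hL : 0 < L := by omega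
  let c : ℂ := ((L : ℂ) - p) / L
  have hc : ‖c‖ < 1 := by
    have hcR : c = (((L - p : ℕ) : ℝ) / L : ℝ) := by push_cast [Nat.cast_sub hpL]; rfl
    rw [hcR, Complex.norm_real, Real.norm_of_nonneg (by positivity),
      div_lt_one (by exact_mod_cast hL)]
    exact_mod_cast (by omega : L - p < L)
  have hrec_affine : ∀ m, η ((L : ℤ) * m) = 1 - c + c * η m := fun m => by
    have hLC : (L : ℂ) ≠ 0 := by exact_mod_cast hL.ne'
    rw [hrec]; simp only [c]; field_simp; ring
  have hunif (ε : ℝ) (hε : 0 < ε) :=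
    exists_forall_norm_apply_pow_mul_sub_one_lt hc hbound hrec_affine hε
  refine ⟨fun ε hε => ?_, hunif⟩
  obtain ⟨N, hN⟩ := hunif ε hε
  refine relDense_of_forall_mul_mem (R := L ^ N) (pow_pos hL N) fun k => ?_
  simpa [norm_sub_rev] using hN N le_rfl k

/-- If `η : ℤ → ℂ` satisfies `η 0 = 1`, `|η m| ≤ 1` and
`η(Lm) = p/L + ((L−p)/L)·η(m)` for `1 ≤ p ≤ L`, then for every `ε > 0` the set
`{m : |1 − η m| < ε}` is relatively dense in `ℤ`, and `η(L^ℓ m) → 1` as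
`ℓ → ∞`, uniformly in `m`. -/
theorem coincidence_almost_periods (L : ℕ) (hL : 2 ≤ L) (p : ℕ)
    (hp1 : 1 ≤ p) (hpL : p ≤ L) (η : ℤ → ℂ)
    (hzero : η 0 = 1)
    (hbound : ∀ m : ℤ, ‖η m‖ ≤ 1)
    (hrec : ∀ m : ℤ, η ((L : ℤ) * m) = (p : ℂ) / L + (((L : ℂ) - p) / L) * η m) :
    (∀ ε : ℝ, 0 < ε → RelDense {m : ℤ | ‖1 - η m‖ < ε}) ∧
    ∀ ε : ℝ, 0 < ε → ∃ N : ℕ, ∀ ℓ : ℕ, N ≤ ℓ → ∀ m : ℤ,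
      ‖η ((L : ℤ) ^ ℓ * m) - 1‖ < ε :=
  coincidence_almost_periods_general L p hp1 hpL η hbound hrec
end

section
/- Let 𝒜 be a compact Hausdorff abelian topological group, L ≥ 2, β_0, …, β_{L−1} ∈ 𝒜, 0 ≤ s ≤ L−1, let C ⊆ {0, …, L−1} with p = |C|, and let w : ℤ → 𝒜 satisfy w_{Lm+k−s} = β_k for all m ∈ ℤ, k ∈ C, and w_{Lm+k−s} = w_m β_k for all m ∈ ℤ, k ∉ C. Let χ be a unitary character of 𝒜 and fix m ∈ ℤ. If the autocorrelation coefficient η(m) exists, then η(Lm) exists and η(Lm) = p/L + ((L−p)/L)·η(m). -/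
open Finset Filter Topology ComplexConjugate

section BoundedSums

variable {E : Type*} [SeminormedAddCommGroup E] {M : ℝ}

lemma norm_sum_le_card_mul {ι : Type*} (s : Finset ι) {f : ι → E} (hf : ∀ i, ‖f i‖ ≤ M) :
    ‖∑ i ∈ s, f i‖ ≤ #s * M :=
  (norm_sum_le_of_le s fun i _ => hf i).trans_eq (by rw [sum_const, nsmul_eq_mul])

lemma norm_sum_Ico_sub_sum_Ico_le {h : ℤ → E} (hh : ∀ j, ‖h j‖ ≤ M) (a b a' b' : ℤ) :
    ‖∑ j ∈ Ico a b, h j - ∑ j ∈ Ico a' b', h j‖ ≤ (|a - a'| + |b - b'|) * M := by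
  have hM : 0 ≤ M := (norm_nonneg _).trans (hh 0)
  have hcard :
      ((#(Ico a b \ Ico a' b') + #(Ico a' b' \ Ico a b) : ℕ) : ℤ) ≤ |a - a'| + |b - b'| := by
    have h₁ := (card_le_card (s := Ico a b \ Ico a' b') (t := Ico a a' ∪ Ico b' b)
      (by intro j; simp only [Finset.mem_sdiff, mem_Ico, mem_union]; omega)).trans
      (card_union_le _ _)
    have h₂ := (card_le_card (s := Ico a' b' \ Ico a b) (t := Ico a' a ∪ Ico b b')
      (by intro j; simp only [Finset.mem_sdiff, mem_Ico, mem_union]; omega)).trans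
      (card_union_le _ _)
    simp only [Int.card_Ico] at h₁ h₂
    rcases abs_cases (a - a') with ⟨ha, _⟩ | ⟨ha, _⟩ <;>
      rcases abs_cases (b - b') with ⟨hb, _⟩ | ⟨hb, _⟩ <;> omega
  rw [← sum_sdiff_sub_sum_sdiff]
  calc _ ≤ ‖∑ j ∈ Ico a b \ Ico a' b', h j‖ + ‖∑ j ∈ Ico a' b' \ Ico a b, h j‖ := norm_sub_le _ _
    _ ≤ #(Ico a b \ Ico a' b') * M + #(Ico a' b' \ Ico a b) * M :=
      add_le_add (norm_sum_le_card_mul _ hh) (norm_sum_le_card_mul _ hh)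
    _ = ((#(Ico a b \ Ico a' b') + #(Ico a' b' \ Ico a b) : ℕ) : ℤ) * M := by push_cast; ring
    _ ≤ _ := mul_le_mul_of_nonneg_right (by exact_mod_cast hcard) hM

end BoundedSums

section Blocks

variable {M : Type*} [AddCommMonoid M]

lemma sum_Ico_add_natCast_eq_sum_fin (h : ℤ → M) (x : ℤ) (L : ℕ) :
    ∑ j ∈ Ico x (x + L), h j = ∑ k : Fin L, h (x + k) := by
  simp [Int.Ico_eq_finset_map, Fin.sum_univ_eq_sum_range (fun k => h (x + k))]

lemma sum_Ico_mul_sub_eq_sum_sum_fin (h : ℤ → M) (L : ℕ) (s a : ℤ) {b : ℤ} (hab : a ≤ b) :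
    ∑ j ∈ Ico (L * a - s) (L * b - s), h j = ∑ q ∈ Ico a b, ∑ k : Fin L, h (L * q + k - s) := by
  induction b, hab using Int.leInduction with
  | base => simp
  | succ b hab ih =>
    have hmono : (L : ℤ) * a - s ≤ L * b - s := by gcongr
    rw [← Ico_union_Ico_eq_Ico hab (by omega : b ≤ b + 1),
      sum_union (Ico_disjoint_Ico_consecutive _ _ _), ← ih, Ico_add_one_right_eq_Icc, Icc_self,
      sum_singleton, show (L : ℤ) * (b + 1) - s = (L * b - s) + L by ring,
      ← Ico_union_Ico_eq_Ico hmono (by omega), sum_union (Ico_disjoint_Ico_consecutive _ _ _),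
      sum_Ico_add_natCast_eq_sum_fin]
    congr! 3; ring

end Blocks

lemma sum_univ_ite_mem_one {L : ℕ} (C : Finset (Fin L)) (x : ℂ) :
    ∑ k : Fin L, (if k ∈ C then 1 else x) = #C + (L - #C) * x := by
  have hC : #C ≤ L := (card_le_univ C).trans_eq (Fintype.card_fin L)
  simp [sum_ite, filter_not, card_sdiff_of_subset (subset_univ C), Nat.cast_sub hC]

noncomputable def windowAvg (h : ℤ → ℂ) (N : ℕ) : ℂ :=
  (∑ j ∈ Icc (-(N : ℤ)) N, h j) / (2 * (N : ℂ) + 1)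

lemma tendsto_div_two_mul_add_one_of_norm_le {x : ℕ → ℂ} {B : ℝ} (hx : ∀ N, ‖x N‖ ≤ B) :
    Tendsto (fun N : ℕ => x N / (2 * N + 1)) atTop (𝓝 0) := by
  have hinv : Tendsto (fun N : ℕ => ((2 * N + 1 : ℕ) : ℂ)⁻¹) atTop (𝓝 0) :=
    tendsto_inv_atTop_nhds_zero_nat.comp
      (tendsto_atTop_mono (fun N => show N ≤ 2 * N + 1 by omega) tendsto_id)
  simpa [div_eq_inv_mul] using hinv.zero_mul_isBoundedUnder_le (isBoundedUnder_of ⟨B, hx⟩)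

lemma mul_div_le_and_lt_mul_div_add {N L : ℕ} (hL : 0 < L) :
    (L : ℤ) * (N / L : ℕ) ≤ N ∧ (N : ℤ) < L * (N / L : ℕ) + L := by
  constructor
  · exact_mod_cast Nat.mul_div_le N L
  · exact_mod_cast (Nat.lt_mul_div_succ N hL).trans_eq (mul_add_one _ _)

lemma tendsto_two_mul_div_add_one_div {L : ℕ} (hL : 0 < L) :
    Tendsto (fun N : ℕ => (2 * ((N / L : ℕ) : ℂ) + 1) / (2 * N + 1)) atTop (𝓝 (1 / L)) := by
  -- `(2K + 1)/(2N + 1) = 1/L + x N/(2N + 1)` for `K = N / L`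
  let x : ℕ → ℂ := fun N => ((L * (2 * (N / L : ℕ) + 1) - (2 * N + 1) : ℤ) : ℂ) / L
  have hx : ∀ N, ‖x N‖ ≤ 1 := by
    intro N
    obtain ⟨h₁, h₂⟩ := mul_div_le_and_lt_mul_div_add (N := N) hL
    rw [norm_div, Complex.norm_intCast, Complex.norm_natCast, div_le_one (by positivity)]
    have hk : |(L : ℤ) * (2 * (N / L : ℕ) + 1) - (2 * N + 1)| ≤ L :=
      abs_le.2 ⟨by linarith, by linarith⟩
    exact_mod_cast hk
  have hLC : (L : ℂ) ≠ 0 := by exact_mod_cast hL.ne'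
  simpa using ((tendsto_div_two_mul_add_one_of_norm_le hx).const_add (1 / (L : ℂ))).congr
    fun N => by
    have : (2 * (N : ℂ) + 1) ≠ 0 := by exact_mod_cast (by omega : 2 * N + 1 ≠ 0)
    simp only [x]
    generalize N / L = K
    field_simp
    push_cast
    ring

lemma tendsto_windowAvg_of_sum_fin_eq {L : ℕ} (hL : 0 < L) (s : ℤ) {f g : ℤ → ℂ} {M : ℝ}
    (hf : ∀ j, ‖f j‖ ≤ M) {c d : ℂ} (hfg : ∀ q, ∑ k : Fin L, f (L * q + k - s) = c + d * g q)
    {z : ℂ} (hg : Tendsto (windowAvg g) atTop (𝓝 z)) :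
    Tendsto (windowAvg f) atTop (𝓝 ((c + d * z) / L)) := by
  let blockSum (K : ℕ) : ℂ := ∑ j ∈ Ico (L * -(K : ℤ) - s) (L * (K + 1) - s), f j
  have hblockSum (K : ℕ) :
      blockSum K = (2 * K + 1) * c + d * ∑ q ∈ Icc (-(K : ℤ)) K, g q := by
    rw [show blockSum K = _ from sum_Ico_mul_sub_eq_sum_sum_fin f L s _ (by omega),
      sum_congr rfl fun q _ => hfg q, sum_add_distrib, sum_const, Int.card_Ico, ← mul_sum,
      Ico_add_one_right_eq_Icc, nsmul_eq_mul, show (K + 1 - -(K : ℤ)).toNat = 2 * K + 1 by omega]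
    push_cast
    ring
  have hM : 0 ≤ M := (norm_nonneg _).trans (hf 0)
  have herr (N : ℕ) :
      ‖(∑ j ∈ Icc (-(N : ℤ)) N, f j) - blockSum (N / L)‖ ≤ (2 * (L + |s|)) * M := by
    obtain ⟨h₁, h₂⟩ := mul_div_le_and_lt_mul_div_add (N := N) hL
    rw [← Ico_add_one_right_eq_Icc]
    refine (norm_sum_Ico_sub_sum_Ico_le hf _ _ _ _).trans (mul_le_mul_of_nonneg_right ?_ hM)
    have hk : |-(N : ℤ) - (L * -((N / L : ℕ) : ℤ) - s)| + |N + 1 - (L * ((N / L : ℕ) + 1) - s)|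
        ≤ 2 * (L + |s|) := by
      have hleft : |-(N : ℤ) - (L * -((N / L : ℕ) : ℤ) - s)| ≤ L + |s| :=
        abs_le.2 ⟨by linarith [neg_abs_le s], by linarith [le_abs_self s]⟩
      have hright : |N + 1 - (L * ((N / L : ℕ) + 1) - s)| ≤ L + |s| :=
        abs_le.2 ⟨by linarith [neg_abs_le s], by linarith [le_abs_self s]⟩
      linarith
    exact_mod_cast hk
  have hlim := (((tendsto_two_mul_div_add_one_div hL).const_mul c).add
    (((hg.comp (Nat.tendsto_div_const_atTop hL.ne')).mul
      (tendsto_two_mul_div_add_one_div hL)).const_mul d)).add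
    (tendsto_div_two_mul_add_one_of_norm_le herr)
  convert hlim using 1
  · ext N
    simp only [windowAvg, Function.comp_apply, hblockSum]
    generalize N / L = K
    have : (2 * (N : ℂ) + 1) ≠ 0 := by exact_mod_cast (by omega : 2 * N + 1 ≠ 0)
    have : (2 * (K : ℂ) + 1) ≠ 0 := by exact_mod_cast (by omega : 2 * K + 1 ≠ 0)
    field_simp
    ring
  · congr 1; ring

lemma autoCorr_iff_tendsto_windowAvg {A : Type*} (χ : A → ℂ) (w : ℤ → A) (m : ℤ) (z : ℂ) :
    AutoCorr χ w m z ↔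
      Tendsto (windowAvg fun j => χ (w j) * conj (χ (w (j + m)))) atTop (𝓝 z) :=
  Iff.rfl

theorem coincidence_recurrence_general {A : Type*} [CommGroup A]
    (L : ℕ) (hL : 2 ≤ L) (β : Fin L → A) (s : ℕ)
    (C : Finset (Fin L))
    (w : ℤ → A)
    (hwC : ∀ (m : ℤ) (k : Fin L), k ∈ C →
      w ((L : ℤ) * m + (k : ℤ) - (s : ℤ)) = β k)
    (hwT : ∀ (m : ℤ) (k : Fin L), k ∉ C →
      w ((L : ℤ) * m + (k : ℤ) - (s : ℤ)) = w m * β k)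
    (χ : A →* ℂ)
    (hχunit : ∀ a : A, ‖χ a‖ = 1)
    (m : ℤ) (z : ℂ) (hz : AutoCorr χ w m z) :
    AutoCorr χ w ((L : ℤ) * m)
      ((C.card : ℂ) / L + (((L : ℂ) - C.card) / L) * z) := by
  have hχconj (a : A) : χ a * conj (χ a) = 1 := by
    rw [Complex.mul_conj', hχunit, Complex.ofReal_one, one_pow]
  have hblock (q : ℤ) :
      ∑ k : Fin L, χ (w (L * q + k - s)) * conj (χ (w (L * q + k - s + L * m)))
        = #C + (L - #C) * (χ (w q) * conj (χ (w (q + m)))) := by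
    rw [← sum_univ_ite_mem_one]
    refine sum_congr rfl fun k _ => ?_
    rw [show (L : ℤ) * q + k - s + L * m = L * (q + m) + k - s by ring]
    split_ifs with hk
    · rw [hwC q k hk, hwC _ k hk, hχconj]
    · rw [hwT q k hk, hwT _ k hk, map_mul, map_mul, map_mul]
      linear_combination (χ (w q) * conj (χ (w (q + m)))) * hχconj (β k)
  have hnorm (j : ℤ) : ‖χ (w j) * conj (χ (w (j + L * m)))‖ ≤ 1 := by
    simp [hχunit]
  rw [autoCorr_iff_tendsto_windowAvg] at hz ⊢
  have := tendsto_windowAvg_of_sum_fin_eq (by omega) s hnorm hblock hz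
  rwa [add_div, mul_div_right_comm] at this

/-- For a pseudo-fixed point `w` of a constant-length-`L`
substitution on a compact Hausdorff abelian group whose columns at positions
`k ∈ C` are the coincidences `θ ↦ β_k` (with `p = |C|`) and whose other
columns are the translations `θ ↦ θβ_k`, weighted by a unitary character `χ`:
if `η(m)` exists then `η(Lm)` exists and
`η(Lm) = p/L + ((L−p)/L)·η(m)`. -/
theorem coincidence_recurrence {A : Type*} [TopologicalSpace A]
    [CompactSpace A] [T2Space A] [CommGroup A] [IsTopologicalGroup A]
    (L : ℕ) (hL : 2 ≤ L) (β : Fin L → A) (s : ℕ) (hs : s ≤ L - 1)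
    (C : Finset (Fin L))
    (w : ℤ → A)
    (hwC : ∀ (m : ℤ) (k : Fin L), k ∈ C →
      w ((L : ℤ) * m + (k : ℤ) - (s : ℤ)) = β k)
    (hwT : ∀ (m : ℤ) (k : Fin L), k ∉ C →
      w ((L : ℤ) * m + (k : ℤ) - (s : ℤ)) = w m * β k)
    (χ : A →* ℂ) (hχcont : Continuous χ)
    (hχunit : ∀ a : A, ‖χ a‖ = 1)
    (m : ℤ) (z : ℂ) (hz : AutoCorr χ w m z) :
    AutoCorr χ w ((L : ℤ) * m)
      ((C.card : ℂ) / L + (((L : ℂ) - C.card) / L) * z) :=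
  coincidence_recurrence_general L hL β s C w hwC hwT χ hχunit m z hz
end

section
/- Let φ ∈ ℝ, α = e^{2πiφ}, and let w : ℕ → ℂ be the unique sequence satisfying w_0 = 1 and, for all m ≥ 0, w_{4m} = w_m (for m ≥ 1), w_{4m+1} = w_m, w_{4m+2} = α·w_m, w_{4m+3} = w_m. Then for every n ∈ ℤ the limit lim_{N→∞} (1/N) Σ_{j=0}^{N−1} w_j^n · conj(w_{j+1}^n) exists and equals 1/3 + (2/3)·cos(2πnφ). -/
/-!
Write `f j = w j * conj (w (j + 1))`, after replacing `w` by `w ^ n` and `α` by `α ^ n` (which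
satisfy the same recursion). Since `|w| = 1`, the four terms of `f` on the block `[4m, 4m + 4)` are
`1, conj α, α, f m`, so the partial sums satisfy `S (4N) = N (1 + α + conj α) + S N`. Hence
`E N = S N - N (1 + α + conj α) / 3` satisfies `E (4N) = E N` and changes by `O(1)` between `4 ⌊N/4⌋`
and `N`, so `E N = O(log N)` and `S N / N → (1 + 2 Re α) / 3`.
-/

open Filter Topology Finset ComplexConjugate

theorem norm_le_add_mul_log_of_norm_le_norm_div_add {F : Type*} [SeminormedAddGroup F]
    {E : ℕ → F} {k : ℕ} {C : ℝ} (hk : 1 < k) (hE : ∀ N, ‖E N‖ ≤ ‖E (N / k)‖ + C) (N : ℕ) :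
    ‖E N‖ ≤ ‖E 0‖ + C * (Nat.log k N + 1) := by
  induction N using Nat.strong_induction_on with
  | _ N ih =>
    rcases lt_or_ge N k with hN | hN
    · simpa [Nat.div_eq_of_lt hN, Nat.log_of_lt hN] using hE N
    · have hlog : Nat.log k (N / k) + 1 = Nat.log k N := by
        have := Nat.log_pos hk hN
        rw [Nat.log_div_base]
        omega
      calc ‖E N‖ ≤ ‖E (N / k)‖ + C := hE N
        _ ≤ ‖E 0‖ + C * (Nat.log k (N / k) + 1) + C := by
          gcongr
          exact ih _ (Nat.div_lt_self (by omega) hk)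
        _ = ‖E 0‖ + C * (Nat.log k N + 1) := by
          rw [← hlog]
          push_cast
          ring

theorem tendsto_norm_div_atTop_of_norm_le_norm_div_add {F : Type*} [SeminormedAddGroup F]
    {E : ℕ → F} {k : ℕ} {C : ℝ} (hk : 1 < k) (hE : ∀ N, ‖E N‖ ≤ ‖E (N / k)‖ + C) :
    Tendsto (fun N : ℕ => ‖E N‖ / N) atTop (𝓝 0) := by
  have hC : 0 ≤ C := by simpa using hE 0
  have hlogb : Tendsto (fun N : ℕ => Real.logb k N / N) atTop (𝓝 0) := by
    simpa [Function.comp_def] using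
      (Real.tendsto_pow_logb_div_mul_add_atTop 1 0 1 one_ne_zero).comp
      tendsto_natCast_atTop_atTop
  have hbound : Tendsto (fun N : ℕ => (‖E 0‖ + C) / N + C * (Real.logb k N / N)) atTop (𝓝 0) := by
    simpa using (tendsto_const_div_atTop_nhds_zero_nat _).add (hlogb.const_mul C)
  refine squeeze_zero (fun N => by positivity) (fun N => ?_) hbound
  calc ‖E N‖ / N ≤ (‖E 0‖ + C * (Real.logb k N + 1)) / N := by
        gcongr
        refine (norm_le_add_mul_log_of_norm_le_norm_div_add hk hE N).trans ?_
        gcongr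
        exact Real.natLog_le_logb N k
    _ = (‖E 0‖ + C) / N + C * (Real.logb k N / N) := by ring

theorem sum_range_mul_eq_nsmul_add {M : Type*} [AddCommMonoid M] {f : ℕ → M} {k : ℕ} {c : M}
    (hblock : ∀ m, ∑ r ∈ range k, f (k * m + r) = c + f m) (N : ℕ) :
    ∑ j ∈ range (k * N), f j = N • c + ∑ j ∈ range N, f j := by
  induction N with
  | zero => simp
  | succ N ih =>
    rw [mul_add_one, sum_range_add, ih, hblock, sum_range_succ, succ_nsmul]
    abel

theorem norm_sum_range_sub_mul_sub_le {𝕜 : Type*} [RCLike 𝕜] {f : ℕ → 𝕜} {k : ℕ} {B : ℝ}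
    (hk : 0 < k) (hf : ∀ j, ‖f j‖ ≤ B) (c : 𝕜) (N : ℕ) :
    ‖(∑ j ∈ range N, f j - N * c) - (∑ j ∈ range (k * (N / k)), f j - ↑(k * (N / k)) * c)‖
      ≤ k * B + k * ‖c‖ := by
  have hN : N = k * (N / k) + N % k := (Nat.div_add_mod N k).symm
  set q := N / k
  set r := N % k
  have hr : r ≤ k := (Nat.mod_lt N hk).le
  have hB : 0 ≤ B := (norm_nonneg _).trans (hf 0)
  have hsplit : (∑ j ∈ range N, f j - N * c) - (∑ j ∈ range (k * q), f j - ↑(k * q) * c)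
      = ∑ x ∈ range r, f (k * q + x) - r * c := by
    rw [hN]
    simp only [sum_range_add]
    push_cast
    ring
  rw [hsplit]
  refine (norm_sub_le _ _).trans ?_
  gcongr
  · refine (norm_sum_le _ _).trans ((sum_le_sum fun x _ => hf _).trans ?_)
    simp only [sum_const, card_range, nsmul_eq_mul]
    gcongr
  · rw [norm_mul, RCLike.norm_natCast]
    gcongr

theorem tendsto_sum_range_div_of_sum_block {𝕜 : Type*} [RCLike 𝕜] {f : ℕ → 𝕜} {k : ℕ} {B : ℝ}
    {c : 𝕜} (hk : 1 < k) (hf : ∀ j, ‖f j‖ ≤ B)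
    (hblock : ∀ m, ∑ r ∈ range k, f (k * m + r) = c + f m) :
    Tendsto (fun N : ℕ => (∑ j ∈ range N, f j) / N) atTop (𝓝 (c / (k - 1))) := by
  set E : ℕ → 𝕜 := fun N => ∑ j ∈ range N, f j - N * (c / (k - 1)) with hE_def
  have hk1 : (k : 𝕜) - 1 ≠ 0 := sub_ne_zero.2 (by exact_mod_cast hk.ne')
  have hE_mul : ∀ M, E (k * M) = E M := by
    intro M
    simp only [hE_def, sum_range_mul_eq_nsmul_add hblock, nsmul_eq_mul]
    push_cast
    field_simp
    ring
  have hE : ∀ N, ‖E N‖ ≤ ‖E (N / k)‖ + (k * B + k * ‖c / (k - 1)‖) := fun N =>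
    calc ‖E N‖ ≤ ‖E (k * (N / k))‖ + ‖E N - E (k * (N / k))‖ := norm_le_insert' _ _
      _ ≤ ‖E (N / k)‖ + (k * B + k * ‖c / (k - 1)‖) := by
        rw [← hE_mul (N / k)]
        gcongr
        exact norm_sum_range_sub_mul_sub_le (by omega) hf _ N
  rw [← tendsto_sub_nhds_zero_iff, tendsto_zero_iff_norm_tendsto_zero]
  refine (tendsto_norm_div_atTop_of_norm_le_norm_div_add hk hE).congr' ?_
  filter_upwards [eventually_ne_atTop 0] with N hN
  have hN' : (N : 𝕜) ≠ 0 := Nat.cast_ne_zero.2 hN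
  rw [hE_def, ← RCLike.norm_natCast (K := 𝕜), ← norm_div]
  congr 1
  field_simp

/-- The one-sided fixed point, from the seed `1`, of the substitution `[θ] ↦ [θ][θ][θα][θ]`: the
letter at `4m + r` is the `r`-th letter of the image of the letter at `m`. -/
structure IsSubstitutionFixedPoint (α : ℂ) (w : ℕ → ℂ) : Prop where
  zero : w 0 = 1
  four_mul : ∀ m : ℕ, 1 ≤ m → w (4 * m) = w m
  four_mul_add_one : ∀ m : ℕ, w (4 * m + 1) = w m
  four_mul_add_two : ∀ m : ℕ, w (4 * m + 2) = α * w m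
  four_mul_add_three : ∀ m : ℕ, w (4 * m + 3) = w m

namespace IsSubstitutionFixedPoint

variable {α : ℂ} {w : ℕ → ℂ}

theorem four_mul_eq (hw : IsSubstitutionFixedPoint α w) (m : ℕ) : w (4 * m) = w m := by
  rcases Nat.eq_zero_or_pos m with rfl | hm
  · rfl
  · exact hw.four_mul m hm

theorem zpow (hw : IsSubstitutionFixedPoint α w) (n : ℤ) :
    IsSubstitutionFixedPoint (α ^ n) (fun j => w j ^ n) where
  zero := by simp only [hw.zero, one_zpow]
  four_mul m hm := by simp only [hw.four_mul m hm]
  four_mul_add_one m := by simp only [hw.four_mul_add_one]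
  four_mul_add_two m := by simp only [hw.four_mul_add_two, mul_zpow]
  four_mul_add_three m := by simp only [hw.four_mul_add_three]

theorem norm_eq_one (hw : IsSubstitutionFixedPoint α w) (hα : ‖α‖ = 1) (j : ℕ) : ‖w j‖ = 1 := by
  induction j using Nat.strong_induction_on with
  | _ j ih =>
    rcases Nat.eq_zero_or_pos j with rfl | hj
    · simp [hw.zero]
    have hm := ih (j / 4) (by omega)
    rw [← Nat.div_add_mod j 4]
    have hr : j % 4 < 4 := Nat.mod_lt _ (by norm_num)
    interval_cases j % 4
    · rwa [add_zero, hw.four_mul_eq]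
    · rwa [hw.four_mul_add_one]
    · rwa [hw.four_mul_add_two, norm_mul, hα, one_mul]
    · rwa [hw.four_mul_add_three]

theorem mul_conj_self (hw : IsSubstitutionFixedPoint α w) (hα : ‖α‖ = 1) (j : ℕ) :
    w j * conj (w j) = 1 := by
  rw [Complex.mul_conj', hw.norm_eq_one hα]
  norm_num

theorem sum_block (hw : IsSubstitutionFixedPoint α w) (hα : ‖α‖ = 1) (m : ℕ) :
    ∑ r ∈ range 4, w (4 * m + r) * conj (w (4 * m + r + 1))
      = (1 + conj α + α) + w m * conj (w (m + 1)) := by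
  simp only [sum_range_succ, sum_range_zero, zero_add, add_zero,
    show 4 * m + 3 + 1 = 4 * (m + 1) by ring]
  rw [hw.four_mul_eq, hw.four_mul_eq, hw.four_mul_add_one, hw.four_mul_add_two,
    hw.four_mul_add_three, map_mul]
  linear_combination (1 + conj α + α) * hw.mul_conj_self hα m

theorem tendsto_autocorrelation (hw : IsSubstitutionFixedPoint α w) (hα : ‖α‖ = 1) :
    Tendsto (fun N : ℕ => (∑ j ∈ range N, w j * conj (w (j + 1))) / N) atTop
      (𝓝 ((1 + conj α + α) / 3)) := by
  have hterm : ∀ j, ‖w j * conj (w (j + 1))‖ ≤ 1 := fun j => by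
    rw [norm_mul, Complex.norm_conj, hw.norm_eq_one hα, hw.norm_eq_one hα, one_mul]
  convert tendsto_sum_range_div_of_sum_block (k := 4) (by norm_num) hterm (hw.sum_block hα)
    using 2
  norm_num

end IsSubstitutionFixedPoint

/-- Let `α = e^{2πiφ}` and let `w : ℕ → ℂ` be the (unique)
sequence with `w 0 = 1`, `w (4m) = w m` (for `m ≥ 1`), `w (4m+1) = w m`,
`w (4m+2) = α·w m` and `w (4m+3) = w m`.  Then for every `n ∈ ℤ` the
autocorrelation coefficient
`lim_{N→∞} (1/N) Σ_{j=0}^{N−1} w_j^n · conj(w_{j+1}^n)` exists and equals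
`1/3 + (2/3)·cos(2πnφ)`. -/
theorem bijective_circle_autocorrelation (φ : ℝ) (α : ℂ)
    (hα : α = Complex.exp (2 * Real.pi * Complex.I * φ))
    (w : ℕ → ℂ) (h0 : w 0 = 1)
    (h4 : ∀ m : ℕ, 1 ≤ m → w (4 * m) = w m)
    (h41 : ∀ m : ℕ, w (4 * m + 1) = w m)
    (h42 : ∀ m : ℕ, w (4 * m + 2) = α * w m)
    (h43 : ∀ m : ℕ, w (4 * m + 3) = w m) :
    ∀ n : ℤ,
      Tendsto (fun N : ℕ =>
          (∑ j ∈ Finset.range N, (w j) ^ n * (starRingEnd ℂ) ((w (j + 1)) ^ n))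
            / (N : ℂ))
        atTop
        (nhds ((1 : ℂ) / 3 + (2 / 3) * Real.cos (2 * Real.pi * (n : ℝ) * φ))) := by
  intro n
  have hw : IsSubstitutionFixedPoint α w := ⟨h0, h4, h41, h42, h43⟩
  have hαn : α ^ n = Complex.exp ((2 * Real.pi * n * φ : ℝ) * Complex.I) := by
    rw [hα, ← Complex.exp_int_mul]
    push_cast
    ring_nf
  have hlim := (hw.zpow n).tendsto_autocorrelation
    (by rw [hαn, Complex.norm_exp_ofReal_mul_I])
  rw [add_assoc, add_comm (conj _), Complex.add_conj, hαn, Complex.exp_ofReal_mul_I_re] at hlim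
  convert hlim using 2
  push_cast
  ring
end

section
/- Let 𝒜 = ℕ ∪ {∞} be the one-point compactification of ℕ and define ℓ : 𝒜 → ℝ by ℓ(n) = 2 − (1/2)^n for n ∈ ℕ and ℓ(∞) = 2. Then ℓ is continuous on 𝒜, satisfies 1 ≤ ℓ(a) ≤ 2 for all a ∈ 𝒜 (so ℓ is strictly positive and bounded), and ℓ is an eigenfunction of the substitution operator with eigenvalue 5/2: ℓ(0) + ℓ(1) = (5/2)·ℓ(0), ℓ(0) + ℓ(n+1) + ℓ(n−1) = (5/2)·ℓ(n) for every n ≥ 1, and ℓ(0) + ℓ(∞) + ℓ(∞) = (5/2)·ℓ(∞). -/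
/-! `ℓ` is `2` minus a geometric sequence of ratio `1/2`, so continuity at `∞` is the
convergence `(1/2)^n → 0`, and the eigenvalue equation for `0 < n < ∞` reduces to
`r^(n+1) + r^(n-1) = (5/2) r^n`, i.e. to `r = 1/2` being a root of `r^2 - (5/2) r + 1`. -/

open OnePoint Filter Topology

lemma half_pow_add_two_add_half_pow (n : ℕ) :
    (1 / 2 : ℝ) ^ (n + 2) + (1 / 2) ^ n = 5 / 2 * (1 / 2) ^ (n + 1) := by
  ring

lemma tendsto_two_sub_half_pow :
    Tendsto (fun n : ℕ => 2 - (1 / 2 : ℝ) ^ n) atTop (𝓝 2) := by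
  simpa using (tendsto_pow_atTop_nhds_zero_of_lt_one (r := (1 / 2 : ℝ))
    (by norm_num) (by norm_num)).const_sub 2

/-- On the one-point compactification `𝒜 = ℕ ∪ {∞}`, the
function `ℓ` with `ℓ(n) = 2 − (1/2)^n` and `ℓ(∞) = 2` is continuous, satisfies
`1 ≤ ℓ ≤ 2`, and is an eigenfunction of the substitution operator of
`ρ(0) = [0][1]`, `ρ(n) = [0][n+1][n−1]`, `ρ(∞) = [0][∞][∞]` with eigenvalue
`5/2`. -/
theorem length_function_eigenfunction (ℓ : OnePoint ℕ → ℝ)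
    (hfin : ∀ n : ℕ, ℓ (n : OnePoint ℕ) = 2 - (1 / 2 : ℝ) ^ n)
    (hinf : ℓ (∞ : OnePoint ℕ) = 2) :
    Continuous ℓ ∧
    (∀ a : OnePoint ℕ, 1 ≤ ℓ a ∧ ℓ a ≤ 2) ∧
    ℓ ((0 : ℕ) : OnePoint ℕ) + ℓ ((1 : ℕ) : OnePoint ℕ)
      = (5 / 2 : ℝ) * ℓ ((0 : ℕ) : OnePoint ℕ) ∧
    (∀ n : ℕ, 1 ≤ n →
      ℓ ((0 : ℕ) : OnePoint ℕ) + ℓ ((n + 1 : ℕ) : OnePoint ℕ)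
          + ℓ ((n - 1 : ℕ) : OnePoint ℕ)
        = (5 / 2 : ℝ) * ℓ ((n : ℕ) : OnePoint ℕ)) ∧
    ℓ ((0 : ℕ) : OnePoint ℕ) + ℓ (∞ : OnePoint ℕ) + ℓ (∞ : OnePoint ℕ)
      = (5 / 2 : ℝ) * ℓ (∞ : OnePoint ℕ) := by
  refine ⟨?_, ?_, ?_, ?_, ?_⟩
  · rw [continuous_iff_from_nat, hinf]
    simpa only [Function.comp_def, hfin] using tendsto_two_sub_half_pow
  · intro a
    induction a using OnePoint.rec with
    | infty => norm_num [hinf]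
    | coe n =>
      rw [hfin]
      have hle : (1 / 2 : ℝ) ^ n ≤ 1 := pow_le_one₀ (by norm_num) (by norm_num)
      have hpos : (0 : ℝ) < (1 / 2) ^ n := by positivity
      constructor <;> linarith
  · norm_num [hfin]
  · intro n hn
    obtain ⟨m, rfl⟩ := Nat.exists_eq_add_of_le' hn
    simp only [hfin, Nat.add_sub_cancel, pow_zero]
    linear_combination -half_pow_add_two_add_half_pow m
  · norm_num [hfin, hinf]
end

section
/- Let 𝒜 = ℕ ∪ {∞} be the one-point compactification of ℕ and let ρ be the substitution ρ(0) = [0][1], ρ(n) = [0][n+1][n−1] for 0 < n < ∞, ρ(∞) = [0][∞][∞]. Then ρ is a continuous map from 𝒜 to the space of finite words over 𝒜 (with 𝒜^n carrying the product topology and the set of words the disjoint-union topology), and ρ is primitive: for every nonempty open U ⊆ 𝒜 there exists p ≥ 1 such that for every a ∈ 𝒜 some letter of ρ^p(a) lies in U. -/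
open OnePoint

/-- A substitution is primitive if for every nonempty open `U ⊆ A` there is a
`p ≥ 1` such that for every letter `a`, some letter of `ρ^p(a)` lies in `U`. -/
def Primitive {A : Type*} [TopologicalSpace A] (ρ : A → List A) : Prop :=
  ∀ U : Set A, IsOpen U → U.Nonempty →
    ∃ p : ℕ, 1 ≤ p ∧ ∀ a : A, ∃ b ∈ substIter ρ p a, b ∈ U

/-- The substitution `ρ(0) = [0][1]`, `ρ(n) = [0][n+1][n−1]` for `0 < n < ∞`,
`ρ(∞) = [0][∞][∞]` on the one-point compactification of `ℕ`. -/
def rhoInf : OnePoint ℕ → List (OnePoint ℕ) :=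
  fun a =>
    Option.elim a [((0 : ℕ) : OnePoint ℕ), (∞ : OnePoint ℕ), (∞ : OnePoint ℕ)]
      (fun n =>
        if n = 0 then [((0 : ℕ) : OnePoint ℕ), ((1 : ℕ) : OnePoint ℕ)]
        else [((0 : ℕ) : OnePoint ℕ), ((n + 1 : ℕ) : OnePoint ℕ),
          ((n - 1 : ℕ) : OnePoint ℕ)])

/-- A finite word, viewed as a point of the disjoint union `⊔_n A^n` of the
spaces `A^n` (each with the product topology, the union with the disjoint
union topology). -/
def wordOf {A : Type*} (l : List A) : Σ n : ℕ, Fin n → A :=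
  ⟨l.length, fun i => l.get i⟩

/-!
Continuity only has to be checked at `∞`, the one non-isolated point: for `n ≥ 1` the word
`ρ(n) = [0][n+1][n−1]` has length 3 and converges letterwise to `ρ(∞) = [0][∞][∞]`.
For primitivity, the naturals are dense in `ℕ ∪ {∞}`, and `k` occurs in `ρ^p(a)` for every `a`
as soon as `p > k`, because `0` occurs in every `ρ(c)` and `k + 1` occurs in `ρ(k)`.
-/

open Filter Topology OnePoint

section Substitution

variable {A : Type*} (ρ : A → List A)

theorem substIter_succ (p : ℕ) (a : A) :
    substIter ρ (p + 1) a = (substIter ρ p a).flatMap ρ :=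
  Function.iterate_succ_apply' _ _ _

theorem mem_substIter_succ {p : ℕ} {a b : A} :
    b ∈ substIter ρ (p + 1) a ↔ ∃ c ∈ substIter ρ p a, b ∈ ρ c := by
  rw [substIter_succ, List.mem_flatMap]

variable {ρ}

theorem mem_substIter_succ_of_forall_mem {b : A} (hb : ∀ c, b ∈ ρ c) (p : ℕ) (a : A) :
    b ∈ substIter ρ (p + 1) a := by
  induction p with
  | zero => simpa [substIter, substWord] using hb a
  | succ p ih => exact (mem_substIter_succ ρ).2 ⟨b, ih, hb b⟩

theorem primitive_of_denseRange [TopologicalSpace A] {ι : Type*} {f : ι → A}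
    (hf : DenseRange f) (h : ∀ i, ∃ p, 1 ≤ p ∧ ∀ a, f i ∈ substIter ρ p a) :
    Primitive ρ := by
  intro U hU hne
  obtain ⟨i, hi⟩ := hf.exists_mem_open hU hne
  obtain ⟨p, hp, hmem⟩ := h i
  exact ⟨p, hp, fun a => ⟨f i, hmem a, hi⟩⟩

end Substitution

theorem wordOf_triple {A : Type*} (a b c : A) : wordOf [a, b, c] = ⟨3, ![a, b, c]⟩ := by
  refine Sigma.ext rfl (heq_of_eq ?_)
  funext i
  fin_cases i <;> rfl

theorem Filter.Tendsto.wordOf_triple {ι A : Type*} [TopologicalSpace A] {l : Filter ι}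
    {f g h : ι → A} {a b c : A} (hf : Tendsto f l (𝓝 a)) (hg : Tendsto g l (𝓝 b))
    (hh : Tendsto h l (𝓝 c)) :
    Tendsto (fun i => wordOf [f i, g i, h i]) l (𝓝 (wordOf [a, b, c])) := by
  simp only [_root_.wordOf_triple]
  refine (continuous_sigmaMk.tendsto _).comp (tendsto_pi_nhds.2 fun i => ?_)
  fin_cases i <;> assumption

theorem OnePoint.tendsto_natCast_atTop_infty :
    Tendsto ((↑) : ℕ → OnePoint ℕ) atTop (𝓝 ∞) := by
  simpa only [coclosedCompact_eq_cocompact, cocompact_eq_cofinite, Nat.cofinite_eq_atTop]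
    using OnePoint.tendsto_coe_infty (X := ℕ)

theorem rhoInf_natCast (n : ℕ) :
    rhoInf n = if n = 0 then [((0 : ℕ) : OnePoint ℕ), ((1 : ℕ) : OnePoint ℕ)]
      else [((0 : ℕ) : OnePoint ℕ), ((n + 1 : ℕ) : OnePoint ℕ), ((n - 1 : ℕ) : OnePoint ℕ)] :=
  rfl

theorem rhoInf_natCast_of_ne_zero {n : ℕ} (hn : n ≠ 0) :
    rhoInf n = [((0 : ℕ) : OnePoint ℕ), ((n + 1 : ℕ) : OnePoint ℕ), ((n - 1 : ℕ) : OnePoint ℕ)] :=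
  if_neg hn

theorem continuous_wordOf_rhoInf : Continuous fun a : OnePoint ℕ => wordOf (rhoInf a) := by
  rw [continuous_iff_from_discrete, Nat.cofinite_eq_atTop]
  have hlim := Tendsto.wordOf_triple (tendsto_const_nhds (x := ((0 : ℕ) : OnePoint ℕ)))
    (tendsto_natCast_atTop_infty.comp (tendsto_add_atTop_nat 1))
    (tendsto_natCast_atTop_infty.comp (tendsto_sub_atTop_nat 1))
  refine hlim.congr' ?_
  filter_upwards [eventually_ne_atTop 0] with n hn
  rw [rhoInf_natCast_of_ne_zero hn]
  rfl

theorem zero_mem_rhoInf (a : OnePoint ℕ) : ((0 : ℕ) : OnePoint ℕ) ∈ rhoInf a := by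
  induction a using OnePoint.rec with
  | infty => exact List.mem_cons_self
  | coe n => by_cases hn : n = 0 <;> simp [rhoInf_natCast, hn]

theorem succ_mem_rhoInf_natCast (n : ℕ) : ((n + 1 : ℕ) : OnePoint ℕ) ∈ rhoInf n := by
  by_cases hn : n = 0 <;> simp [rhoInf_natCast, hn]

theorem natCast_mem_substIter_rhoInf {k p : ℕ} (hkp : k < p) (a : OnePoint ℕ) :
    (k : OnePoint ℕ) ∈ substIter rhoInf p a := by
  obtain ⟨q, rfl⟩ := Nat.exists_eq_add_one_of_ne_zero (Nat.ne_zero_of_lt hkp)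
  induction k generalizing q with
  | zero => exact mem_substIter_succ_of_forall_mem zero_mem_rhoInf q a
  | succ k ih =>
    obtain ⟨r, rfl⟩ := Nat.exists_eq_add_one_of_ne_zero (show q ≠ 0 by omega)
    exact (mem_substIter_succ rhoInf).2 ⟨k, ih r (by omega), succ_mem_rhoInf_natCast k⟩

theorem primitive_rhoInf : Primitive rhoInf :=
  primitive_of_denseRange OnePoint.denseRange_coe fun k =>
    ⟨k + 1, Nat.le_add_left 1 k, natCast_mem_substIter_rhoInf k.lt_succ_self⟩

/-- The substitution `ρ(0) = [0][1]`,
`ρ(n) = [0][n+1][n−1]`, `ρ(∞) = [0][∞][∞]` on `ℕ ∪ {∞}` is a continuous map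
into the space of finite words, and is primitive. -/
theorem rhoInf_continuous_and_primitive :
    Continuous (fun a : OnePoint ℕ => wordOf (rhoInf a)) ∧ Primitive rhoInf :=
  ⟨continuous_wordOf_rhoInf, primitive_rhoInf⟩
end
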